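/- Let f : ℝⁿ → ℝ be continuous with support contained in the ball B_{r/5}, not identically zero. Then the map S ↦ (μ_S * f)(0) = Σ_{x ∈ S} f(−x) is continuous from (U_r, d) to ℝ. -/
import Mathlib


open Metric Set Pointwise Filter

variable {n : ℕ}

/-- The set `D(S,S')` of scales `a > 0` at which `S` and `S'` agree up to `a`. -/
def DSet (S S' : Set (EuclideanSpace ℝ (Fin n))) : Set ℝ :=
  {a : ℝ | 0 < a ∧ S ∩ closedBall (0 : EuclideanSpace ℝ (Fin n)) a⁻¹ ⊆ S' + closedBall (0 : EuclideanSpace ℝ (Fin n)) a ∧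
    S' ∩ closedBall (0 : EuclideanSpace ℝ (Fin n)) a⁻¹ ⊆ S + closedBall (0 : EuclideanSpace ℝ (Fin n)) a}

/-- `d(S,S') = min (1/√2, inf D(S,S'))`. -/
noncomputable def dLF (S S' : Set (EuclideanSpace ℝ (Fin n))) : ℝ :=
  sInf (insert (Real.sqrt 2)⁻¹ (DSet S S'))

/-- `S` is uniformly discrete with parameter `r`. -/
def UniformlyDiscreteSet (r : ℝ) (S : Set (EuclideanSpace ℝ (Fin n))) : Prop :=
  ∀ x ∈ S, ∀ y ∈ S, x ≠ y → r ≤ dist x y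

/-- `(μ_S * f)(0) = ∑_{x ∈ S} f(-x)`. -/
noncomputable def muConv (f : EuclideanSpace ℝ (Fin n) → ℝ)
    (S : Set (EuclideanSpace ℝ (Fin n))) : ℝ :=
  ∑' x : S, f (-(x : EuclideanSpace ℝ (Fin n)))

lemma f_vanish {r : ℝ} {f : EuclideanSpace ℝ (Fin n) → ℝ}
    (hsupp : Function.support f ⊆ closedBall (0 : EuclideanSpace ℝ (Fin n)) (r / 5))
    {x : EuclideanSpace ℝ (Fin n)} (hx : r / 5 < ‖x‖) : f (-x) = 0 := by
  by_contra h
  have h1 : -x ∈ Function.support f := h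
  have h2 := hsupp h1
  rw [mem_closedBall, dist_zero_right, norm_neg] at h2
  linarith

lemma muConv_eq_single {r : ℝ} (hr : 0 < r) {f : EuclideanSpace ℝ (Fin n) → ℝ}
    (hsupp : Function.support f ⊆ closedBall (0 : EuclideanSpace ℝ (Fin n)) (r / 5))
    {S : Set (EuclideanSpace ℝ (Fin n))} (hS : UniformlyDiscreteSet r S)
    {x : EuclideanSpace ℝ (Fin n)} (hx : x ∈ S) (hxr : ‖x‖ ≤ r / 5) :
    muConv f S = f (-x) := by
  apply tsum_eq_single (⟨x, hx⟩ : S)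
  rintro ⟨y, hy⟩ hne
  have hxy : y ≠ x := fun h => hne (by simp [h])
  have hd := hS y hy x hx hxy
  have hdy : dist y x ≤ ‖y‖ + ‖x‖ := by
    rw [dist_eq_norm]; exact norm_sub_le y x
  exact f_vanish hsupp (by linarith)

lemma muConv_eq_zero {r : ℝ} {f : EuclideanSpace ℝ (Fin n) → ℝ}
    (hsupp : Function.support f ⊆ closedBall (0 : EuclideanSpace ℝ (Fin n)) (r / 5))
    {S : Set (EuclideanSpace ℝ (Fin n))} (h : ∀ x ∈ S, r / 5 < ‖x‖) :
    muConv f S = 0 := by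
  have : ∀ z : S, f (-(z : EuclideanSpace ℝ (Fin n))) = 0 :=
    fun z => f_vanish hsupp (h z z.2)
  calc muConv f S = ∑' _ : S, (0 : ℝ) := tsum_congr this
  _ = 0 := tsum_zero

/-- If `f` is continuous with support in `B_{r/5}` and not identically `0`, then
`S ↦ (μ_S * f)(0)` is continuous from `(U_r, d)` to `ℝ`. -/
theorem muConv_continuous {r : ℝ} (hr : 0 < r)
    (f : EuclideanSpace ℝ (Fin n) → ℝ) (hf : Continuous f)
    (hsupp : Function.support f ⊆ closedBall (0 : EuclideanSpace ℝ (Fin n)) (r / 5))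
    (hne : f ≠ 0) :
    ∀ S : Set (EuclideanSpace ℝ (Fin n)), UniformlyDiscreteSet r S →
      ∀ ε > 0, ∃ δ > 0, ∀ S' : Set (EuclideanSpace ℝ (Fin n)),
        UniformlyDiscreteSet r S' → dLF S S' < δ → |muConv f S' - muConv f S| < ε := by
  intro S hS ε hε
  -- uniform continuity of f
  have hcs : HasCompactSupport f := by
    apply IsCompact.of_isClosed_subset (isCompact_closedBall (0 : EuclideanSpace ℝ (Fin n)) (r / 5))
      isClosed_closure (closure_minimal hsupp Metric.isClosed_closedBall)
  obtain ⟨η, hη, hmod⟩ := Metric.uniformContinuous_iff.mp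
    (hcs.uniformContinuous_of_continuous hf) ε hε
  set δ : ℝ := min η (min (Real.sqrt 2)⁻¹ (min (r / 5) (5 / r))) with hδdef
  have hδpos : 0 < δ := by
    have h2 : (0:ℝ) < (Real.sqrt 2)⁻¹ := by positivity
    simp only [hδdef, lt_min_iff]
    exact ⟨hη, h2, by positivity, by positivity⟩
  refine ⟨δ, hδpos, ?_⟩
  intro S' hS' hd
  have hδη : δ ≤ η := min_le_left _ _
  have hδ2 : δ ≤ (Real.sqrt 2)⁻¹ := le_trans (min_le_right _ _) (min_le_left _ _)
  have hδr : δ ≤ r / 5 := le_trans (min_le_right _ _) (le_trans (min_le_right _ _) (min_le_left _ _))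
  have hδ5r : δ ≤ 5 / r := le_trans (min_le_right _ _) (le_trans (min_le_right _ _) (min_le_right _ _))
  -- extract a scale a from dLF < δ
  have hbdd : BddBelow (insert (Real.sqrt 2)⁻¹ (DSet S S')) := by
    refine ⟨0, ?_⟩
    rintro x (rfl | hx)
    · positivity
    · exact hx.1.le
  have hnonempty : (insert (Real.sqrt 2)⁻¹ (DSet S S')).Nonempty := ⟨_, mem_insert _ _⟩
  obtain ⟨a, ha_mem, haδ⟩ := (csInf_lt_iff hbdd hnonempty).mp hd
  have ha : a ∈ DSet S S' := by
    rcases ha_mem with rfl | h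
    · exact absurd (lt_of_le_of_lt hδ2 haδ) (lt_irrefl _)
    · exact h
  obtain ⟨ha0, hSS', hS'S⟩ := ha
  have har : r / 5 < a⁻¹ := by
    have h1 : a < 5 / r := lt_of_lt_of_le haδ hδ5r
    calc r / 5 = (5 / r)⁻¹ := by rw [inv_div]
    _ < a⁻¹ := by gcongr
  -- matching lemmas
  have match1 : ∀ T T' : Set (EuclideanSpace ℝ (Fin n)),
      (T ∩ closedBall 0 a⁻¹ ⊆ T' + closedBall (0 : EuclideanSpace ℝ (Fin n)) a) →
      ∀ x ∈ T, ‖x‖ ≤ r / 5 → ∃ y ∈ T', dist x y ≤ a := by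
    intro T T' hsub x hx hxr
    have hxball : x ∈ closedBall (0 : EuclideanSpace ℝ (Fin n)) a⁻¹ := by
      rw [mem_closedBall, dist_zero_right]; linarith
    obtain ⟨y, hy, z, hz, hyz⟩ := Set.mem_add.mp (hsub ⟨hx, hxball⟩)
    refine ⟨y, hy, ?_⟩
    rw [mem_closedBall, dist_zero_right] at hz
    rw [dist_eq_norm]
    have : x - y = z := by rw [← hyz]; abel
    rw [this]; exact hz
  have key : ∀ u v : EuclideanSpace ℝ (Fin n), dist u v ≤ a →
      |f (-v) - f (-u)| < ε := by
    intro u v huv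
    have : dist (-v) (-u) < η := by
      rw [dist_neg_neg, dist_comm]
      exact lt_of_le_of_lt huv (lt_of_lt_of_le haδ hδη)
    have := hmod this
    rwa [Real.dist_eq] at this
  by_cases hSball : ∃ x ∈ S, ‖x‖ ≤ r / 5
  · obtain ⟨x, hx, hxr⟩ := hSball
    have hmS : muConv f S = f (-x) := muConv_eq_single hr hsupp hS hx hxr
    obtain ⟨x', hx', hdxx'⟩ := match1 S S' hSS' x hx hxr
    have hx'norm : ‖x'‖ ≤ r / 5 + a := by
      have : ‖x'‖ ≤ ‖x‖ + dist x x' := by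
        rw [dist_eq_norm]
        calc ‖x'‖ = ‖x + (x' - x)‖ := by congr 1; abel
        _ ≤ ‖x‖ + ‖x' - x‖ := norm_add_le _ _
        _ = ‖x‖ + ‖x - x'‖ := by rw [norm_sub_rev]
      linarith
    by_cases hx'r : ‖x'‖ ≤ r / 5
    · have hmS' : muConv f S' = f (-x') := muConv_eq_single hr hsupp hS' hx' hx'r
      rw [hmS, hmS']
      exact key x x' hdxx'
    · push_neg at hx'r
      have haδr : a < r / 5 := lt_of_lt_of_le haδ hδr
      have hmS' : muConv f S' = 0 := by
        apply muConv_eq_zero hsupp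
        intro y' hy'
        by_contra hle
        push_neg at hle
        have hne' : x' ≠ y' := fun h => absurd (h ▸ hle) (not_le.mpr hx'r)
        have := hS' x' hx' y' hy' hne'
        have hd2 : dist x' y' ≤ ‖x'‖ + ‖y'‖ := by
          rw [dist_eq_norm]; exact norm_sub_le _ _
        linarith
      have hfx' : f (-x') = 0 := f_vanish hsupp hx'r
      rw [hmS, hmS']
      have := key x x' hdxx'
      rw [hfx'] at this
      simpa using this
  · push_neg at hSball
    have hmS : muConv f S = 0 := muConv_eq_zero hsupp hSball
    by_cases hS'ball : ∃ x' ∈ S', ‖x'‖ ≤ r / 5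
    · obtain ⟨x', hx', hx'r⟩ := hS'ball
      have hmS' : muConv f S' = f (-x') := muConv_eq_single hr hsupp hS' hx' hx'r
      obtain ⟨x, hx, hdx⟩ := match1 S' S hS'S x' hx' hx'r
      have hfx : f (-x) = 0 := f_vanish hsupp (hSball x hx)
      rw [hmS, hmS']
      have := key x' x hdx
      rw [hfx] at this
      simpa using this
    · push_neg at hS'ball
      have hmS' : muConv f S' = 0 := muConv_eq_zero hsupp hS'ball
      rw [hmS, hmS']
      simpa using hε
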